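/- Under these assumptions, the Lin–Lu–Yau Ricci curvature of the adjacent pair satisfies κ(τ,σ) ≥ Ric(τ,σ)/(d_τ∨d_σ) + 2·(1/(d_τ∧d_σ) − 1/(d_τ∨d_σ)) + (d_τ∧d_σ)/(d_τ∨d_σ) − 1. -/

import Mathlib

/-!
The ratio `κ_α(τ,σ)/(1-α)` is nondecreasing in `α`: `m_x^b` is the mixture of `δ_x` and `m_x^a`
with weights `(b-a)/(1-a)` and `(1-b)/(1-a)`, and transporting `δ_τ` to `δ_σ` costs `d(τ,σ)`.
Hence `κ(τ,σ) ≥ 2 κ_{1/2}(τ,σ)`, and it suffices to exhibit one cheap transport plan. With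
`p = (1-α)/d_τ`, `q = (1-α)/d_σ` and `α ≥ 1/2`: keep `q` at `τ` and `p` at `σ`, send `S_τ` to `σ`
and feed `S_σ` from `τ`, move `min p q` along every matched edge `t — φ t`, send the rest of `T_τ`
to `σ` and feed the rest of `T_σ` from `τ`; what is left at `τ` goes to `σ`. Every move has length
at most 2, and the cost `3 - 2α - 2p - 2q - 2 #T_τ min p q` rearranges to the claimed bound.
-/

open Finset Filter Topology

noncomputable section

/-- A coupling between two (probability) mass functions `μ` and `ν` on a finite
vertex set: a matrix with values in `[0,1]` whose row sums are `μ` and whose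
column sums are `ν`. -/
def IsCoupling {V : Type*} [Fintype V] (A : V → V → ℝ) (μ ν : V → ℝ) : Prop :=
  (∀ x y, 0 ≤ A x y ∧ A x y ≤ 1) ∧
  (∀ x, ∑ y, A x y = μ x) ∧
  (∀ y, ∑ x, A x y = ν y)

/-- The (1-)Wasserstein distance between two mass functions on the vertex set of a
graph, with respect to the graph distance. -/
def Wass {V : Type*} [Fintype V] (G : SimpleGraph V) (μ ν : V → ℝ) : ℝ :=
  sInf {c | ∃ A : V → V → ℝ, IsCoupling A μ ν ∧
    c = ∑ x, ∑ y, A x y * (G.dist x y : ℝ)}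

/-- The probability measure `m_x^α`: mass `α` at `x`, mass `(1-α)/d_x` at each
neighbor of `x`, and `0` elsewhere. -/
def mMeas {V : Type*} [Fintype V] [DecidableEq V] (G : SimpleGraph V)
    [DecidableRel G.Adj] (α : ℝ) (x : V) : V → ℝ :=
  fun z => if z = x then α else if G.Adj x z then (1 - α) / (G.degree x : ℝ) else 0

/-- The `α`-Ricci curvature `κ_α(x,y) = 1 - W(m_x^α, m_y^α)/d(x,y)`. -/
def kappaAlpha {V : Type*} [Fintype V] [DecidableEq V] (G : SimpleGraph V)
    [DecidableRel G.Adj] (α : ℝ) (x y : V) : ℝ :=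
  1 - Wass G (mMeas G α x) (mMeas G α y) / (G.dist x y : ℝ)

/-- The Lin–Lu–Yau Ricci curvature `κ(x,y) = lim_{α→1⁻} κ_α(x,y)/(1-α)`. -/
def kappa {V : Type*} [Fintype V] [DecidableEq V] (G : SimpleGraph V)
    [DecidableRel G.Adj] (x y : V) : ℝ :=
  limUnder (𝓝[<] (1 : ℝ)) (fun α => kappaAlpha G α x y / (1 - α))

/-- The (non-normalized) graph Laplacian `(Δf)(x) = d_x f(x) - ∑_{y ~ x} f(y)`. -/
def lap {V : Type*} [Fintype V] [DecidableEq V] (G : SimpleGraph V)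
    [DecidableRel G.Adj] (f : V → ℝ) (x : V) : ℝ :=
  (G.degree x : ℝ) * f x - ∑ y ∈ G.neighborFinset x, f y

end

section Transport

variable {V : Type*} [Fintype V] (G : SimpleGraph V)

noncomputable def transportCost (A : V → V → ℝ) : ℝ :=
  ∑ x, ∑ y, A x y * (G.dist x y : ℝ)

lemma transportCost_add (A B : V → V → ℝ) :
    transportCost G (A + B) = transportCost G A + transportCost G B := by
  simp only [transportCost, Pi.add_apply, add_mul, sum_add_distrib]

lemma transportCost_smul (c : ℝ) (A : V → V → ℝ) :
    transportCost G (c • A) = c * transportCost G A := by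
  simp only [transportCost, Pi.smul_apply, smul_eq_mul, mul_sum, mul_assoc]

lemma transportCost_le_of_dist_le {A : V → V → ℝ} {M : ℝ} (hA : ∀ x y, 0 ≤ A x y)
    (hM : ∀ x y, A x y ≠ 0 → (G.dist x y : ℝ) ≤ M) :
    transportCost G A ≤ M * ∑ x, ∑ y, A x y := by
  rw [mul_sum]
  refine sum_le_sum fun x _ => ?_
  rw [mul_sum]
  refine sum_le_sum fun y _ => ?_
  rcases eq_or_ne (A x y) 0 with h | h
  · simp [h]
  · rw [mul_comm M]
    exact mul_le_mul_of_nonneg_left (hM x y h) (hA x y)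

variable {G}

lemma IsCoupling.of_nonneg {A : V → V → ℝ} {μ ν : V → ℝ} (hA : ∀ x y, 0 ≤ A x y)
    (hrow : ∀ x, ∑ y, A x y = μ x) (hcol : ∀ y, ∑ x, A x y = ν y) (hμ : ∀ x, μ x ≤ 1) :
    IsCoupling A μ ν :=
  ⟨fun x y => ⟨hA x y, (single_le_sum (fun z _ => hA x z) (mem_univ y)).trans
    ((hrow x).trans_le (hμ x))⟩, hrow, hcol⟩

lemma isCoupling_mul {μ ν : V → ℝ} (hμ : ∀ x, 0 ≤ μ x) (hμ1 : ∀ x, μ x ≤ 1)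
    (hν : ∀ y, 0 ≤ ν y) (hμs : ∑ x, μ x = 1) (hνs : ∑ y, ν y = 1) :
    IsCoupling (fun x y => μ x * ν y) μ ν :=
  .of_nonneg (fun x y => mul_nonneg (hμ x) (hν y))
    (fun x => by rw [← mul_sum, hνs, mul_one]) (fun y => by rw [← sum_mul, hμs, one_mul]) hμ1

lemma Wass_le_transportCost {μ ν : V → ℝ} {A : V → V → ℝ} (hA : IsCoupling A μ ν) :
    Wass G μ ν ≤ transportCost G A := by
  refine csInf_le ⟨0, ?_⟩ ⟨A, hA, rfl⟩
  rintro _ ⟨B, hB, rfl⟩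
  exact sum_nonneg fun x _ => sum_nonneg fun y _ => mul_nonneg (hB.1 x y).1 (Nat.cast_nonneg _)

lemma le_Wass {μ ν : V → ℝ} {b : ℝ} (hne : ∃ A, IsCoupling A μ ν)
    (hb : ∀ A, IsCoupling A μ ν → b ≤ transportCost G A) : b ≤ Wass G μ ν := by
  obtain ⟨A, hA⟩ := hne
  exact le_csInf ⟨_, A, hA, rfl⟩ (by rintro _ ⟨B, hB, rfl⟩; exact hb B hB)

lemma sub_le_Wass_of_lipschitz {μ ν f : V → ℝ} (hne : ∃ A, IsCoupling A μ ν)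
    (hf : ∀ x y, f x - f y ≤ G.dist x y) :
    ∑ x, μ x * f x - ∑ y, ν y * f y ≤ Wass G μ ν := by
  refine le_Wass hne fun A ⟨hA, hrow, hcol⟩ => ?_
  calc ∑ x, μ x * f x - ∑ y, ν y * f y = ∑ x, ∑ y, A x y * (f x - f y) := by
        simp only [mul_sub, sum_sub_distrib, ← hrow, ← hcol, sum_mul]
        rw [sum_comm (f := fun y x => A x y * f y)]
    _ ≤ transportCost G A :=
        sum_le_sum fun x _ => sum_le_sum fun y _ => mul_le_mul_of_nonneg_left (hf x y) (hA x y).1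

end Transport

section Indicator

variable {V : Type*} [DecidableEq V]

def ind (S : Finset V) (x : V) : ℝ := if x ∈ S then 1 else 0

lemma ind_nonneg (S : Finset V) (x : V) : 0 ≤ ind S x := by
  unfold ind; split_ifs <;> norm_num

lemma ind_le_one (S : Finset V) (x : V) : ind S x ≤ 1 := by
  unfold ind; split_ifs <;> norm_num

lemma sum_ind_mul [Fintype V] (S : Finset V) (f : V → ℝ) : ∑ x, ind S x * f x = ∑ x ∈ S, f x := by
  simp [ind, ite_mul, sum_ite_mem]

lemma sum_ind [Fintype V] (S : Finset V) : ∑ x, ind S x = #S := by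
  simpa using sum_ind_mul S 1

lemma ind_insert_union {y : V} {S T : Finset V} (hy : y ∉ S ∪ T) (hST : Disjoint S T) (x : V) :
    ind (insert y (S ∪ T)) x = ind {y} x + ind S x + ind T x := by
  have hST' : x ∈ S → x ∉ T := fun h => Finset.disjoint_left.mp hST h
  by_cases hxy : x = y
  · subst hxy
    simp_all [ind]
  · unfold ind
    by_cases hS : x ∈ S <;> simp_all

end Indicator

section Plans

variable {V : Type*} [DecidableEq V]

def rectPlan (c : ℝ) (U W : Finset V) : V → V → ℝ := fun x y => c * ind U x * ind W y

def matchPlan (c : ℝ) (T : Finset V) (φ : V → V) : V → V → ℝ :=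
  fun x y => c * ind T x * ind {φ x} y

lemma rectPlan_nonneg {c : ℝ} (hc : 0 ≤ c) (U W : Finset V) (x y : V) : 0 ≤ rectPlan c U W x y :=
  mul_nonneg (mul_nonneg hc (ind_nonneg U x)) (ind_nonneg W y)

lemma matchPlan_nonneg {c : ℝ} (hc : 0 ≤ c) (T : Finset V) (φ : V → V) (x y : V) :
    0 ≤ matchPlan c T φ x y :=
  mul_nonneg (mul_nonneg hc (ind_nonneg T x)) (ind_nonneg _ y)

variable [Fintype V]

lemma sum_rectPlan_right (c : ℝ) (U W : Finset V) (x : V) :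
    ∑ y, rectPlan c U W x y = c * #W * ind U x := by
  simp only [rectPlan, ← mul_sum, sum_ind]; ring

lemma sum_rectPlan_left (c : ℝ) (U W : Finset V) (y : V) :
    ∑ x, rectPlan c U W x y = c * #U * ind W y := by
  simp only [rectPlan, ← sum_mul, ← mul_sum, sum_ind]

lemma sum_matchPlan_right (c : ℝ) (T : Finset V) (φ : V → V) (x : V) :
    ∑ y, matchPlan c T φ x y = c * ind T x := by
  simp only [matchPlan, ← mul_sum, sum_ind, card_singleton, Nat.cast_one, mul_one]

lemma sum_matchPlan_left (c : ℝ) {T : Finset V} {φ : V → V} (hφ : Set.InjOn φ T) (y : V) :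
    ∑ x, matchPlan c T φ x y = c * ind (T.image φ) y := by
  simp only [matchPlan, mul_assoc, ← mul_sum, sum_ind_mul]
  congr 1
  rw [← sum_image (f := fun z => ind {z} y) hφ]
  simp [ind, sum_ite_eq]

variable (G : SimpleGraph V)

lemma transportCost_rectPlan_le {c M : ℝ} (hc : 0 ≤ c) {U W : Finset V}
    (hM : ∀ x ∈ U, ∀ y ∈ W, (G.dist x y : ℝ) ≤ M) :
    transportCost G (rectPlan c U W) ≤ M * (c * #U * #W) := by
  refine (transportCost_le_of_dist_le G (M := M) (rectPlan_nonneg hc U W)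
    fun x y h => ?_).trans_eq ?_
  · simp only [rectPlan, ind, ne_eq, mul_eq_zero, ite_eq_right_iff, not_or, not_forall] at h
    exact hM x h.1.2.1 y h.2.1
  · simp only [sum_rectPlan_right, ← mul_sum, sum_ind]
    ring

lemma transportCost_matchPlan_le {c M : ℝ} (hc : 0 ≤ c) {T : Finset V} {φ : V → V}
    (hM : ∀ x ∈ T, (G.dist x (φ x) : ℝ) ≤ M) :
    transportCost G (matchPlan c T φ) ≤ M * (c * #T) := by
  refine (transportCost_le_of_dist_le G (M := M) (matchPlan_nonneg hc T φ)
    fun x y h => ?_).trans_eq ?_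
  · simp only [matchPlan, ind, mem_singleton, ne_eq, mul_eq_zero, ite_eq_right_iff, not_or,
      not_forall] at h
    obtain ⟨⟨-, hx, -⟩, rfl, -⟩ := h
    exact hM x hx
  · simp only [sum_matchPlan_right, ← mul_sum, sum_ind]

end Plans

section Mixture

variable {V : Type*} [Fintype V] [DecidableEq V] {G : SimpleGraph V}

lemma Wass_mix_dirac_le {μ ν : V → ℝ} {t : ℝ} (ht0 : 0 ≤ t) (ht1 : t < 1)
    (hμ1 : ∀ z, μ z ≤ 1) (hne : ∃ A, IsCoupling A μ ν) (x y : V) :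
    Wass G (fun z => t * ind {x} z + (1 - t) * μ z) (fun z => t * ind {y} z + (1 - t) * ν z)
      ≤ t * G.dist x y + (1 - t) * Wass G μ ν := by
  have h1t : 0 < 1 - t := by linarith
  set μt : V → ℝ := fun z => t * ind {x} z + (1 - t) * μ z
  set νt : V → ℝ := fun z => t * ind {y} z + (1 - t) * ν z
  have key : ∀ A, IsCoupling A μ ν →
      Wass G μt νt ≤ t * G.dist x y + (1 - t) * transportCost G A := by
    rintro A ⟨hA, hrow, hcol⟩
    have hB : IsCoupling (rectPlan t {x} {y} + (1 - t) • A) μt νt := by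
      refine .of_nonneg (fun a b => add_nonneg (rectPlan_nonneg ht0 _ _ a b)
        (mul_nonneg h1t.le (hA a b).1)) (fun a => ?_) (fun b => ?_) (fun z => ?_)
      · simp [μt, sum_add_distrib, sum_rectPlan_right, ← mul_sum, hrow]
      · simp [νt, sum_add_distrib, sum_rectPlan_left, ← mul_sum, hcol]
      · nlinarith [ind_le_one {x} z, hμ1 z]
    calc Wass G μt νt ≤ transportCost G (rectPlan t {x} {y} + (1 - t) • A) :=
          Wass_le_transportCost hB
      _ ≤ G.dist x y * (t * #{x} * #{y}) + (1 - t) * transportCost G A := by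
        rw [transportCost_add, transportCost_smul]
        gcongr
        exact transportCost_rectPlan_le G ht0 (by simp)
      _ = t * G.dist x y + (1 - t) * transportCost G A := by
        rw [card_singleton, card_singleton, Nat.cast_one]
        ring
  have hW : (Wass G μt νt - t * G.dist x y) / (1 - t) ≤ Wass G μ ν :=
    le_Wass hne fun A hA => by rw [div_le_iff₀ h1t]; linarith [key A hA]
  rw [div_le_iff₀ h1t] at hW
  linarith

end Mixture

section RandomWalk

variable {V : Type*} [Fintype V] [DecidableEq V] (G : SimpleGraph V) [DecidableRel G.Adj]

lemma mMeas_eq_ind (α : ℝ) (x : V) :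
    mMeas G α x = fun z => α * ind {x} z + (1 - α) / G.degree x * ind (G.neighborFinset x) z := by
  funext z
  by_cases hz : z = x
  · subst hz
    simp [mMeas, ind]
  · simp [mMeas, ind, hz]

lemma mMeas_nonneg {α : ℝ} (hα0 : 0 ≤ α) (hα1 : α ≤ 1) (x z : V) : 0 ≤ mMeas G α x z := by
  unfold mMeas
  split_ifs
  · exact hα0
  · exact div_nonneg (by linarith) (Nat.cast_nonneg _)
  · exact le_rfl

lemma mMeas_le_one {α : ℝ} (hα0 : 0 ≤ α) (hα1 : α ≤ 1) (x z : V) : mMeas G α x z ≤ 1 := by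
  unfold mMeas
  split_ifs with _ hxz
  · exact hα1
  · have : (1 : ℝ) ≤ G.degree x := by
      exact_mod_cast G.degree_pos_iff_exists_adj x |>.mpr ⟨z, hxz⟩
    rw [div_le_one (by linarith)]
    linarith
  · exact zero_le_one

lemma sum_mMeas_mul (α : ℝ) (x : V) (f : V → ℝ) :
    ∑ z, mMeas G α x z * f z = α * f x + (1 - α) / G.degree x * ∑ y ∈ G.neighborFinset x, f y := by
  simp only [mMeas_eq_ind, add_mul, sum_add_distrib, mul_assoc, ← mul_sum, sum_ind_mul,
    sum_singleton]

lemma sum_mMeas (α : ℝ) {x : V} (hx : 0 < G.degree x) : ∑ z, mMeas G α x z = 1 := by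
  have h := sum_mMeas_mul G α x 1
  simp only [Pi.one_apply, mul_one, sum_const, SimpleGraph.card_neighborFinset_eq_degree,
    nsmul_eq_mul] at h
  rw [h, div_mul_cancel₀ _ (by positivity)]
  ring

lemma exists_isCoupling_mMeas {α : ℝ} (hα0 : 0 ≤ α) (hα1 : α ≤ 1) {x y : V}
    (hx : 0 < G.degree x) (hy : 0 < G.degree y) :
    ∃ A, IsCoupling A (mMeas G α x) (mMeas G α y) :=
  ⟨_, isCoupling_mul (mMeas_nonneg G hα0 hα1 x) (mMeas_le_one G hα0 hα1 x)
    (mMeas_nonneg G hα0 hα1 y) (sum_mMeas G α hx) (sum_mMeas G α hy)⟩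

lemma mMeas_eq_mix {a : ℝ} (ha : a < 1) (b : ℝ) (x : V) :
    mMeas G b x =
      fun z => (b - a) / (1 - a) * ind {x} z + (1 - (b - a) / (1 - a)) * mMeas G a x z := by
  have : 1 - a ≠ 0 := by linarith
  funext z
  simp only [mMeas_eq_ind]
  field_simp
  ring

end RandomWalk

section Curvature

variable {V : Type*} [Fintype V] [DecidableEq V] {G : SimpleGraph V} [DecidableRel G.Adj]

lemma kappaAlpha_div_le_div {x y : V} (hx : 0 < G.degree x) (hy : 0 < G.degree y)
    (hxy : 0 < G.dist x y) {a b : ℝ} (ha : 0 ≤ a) (hab : a ≤ b) (hb : b < 1) :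
    kappaAlpha G a x y / (1 - a) ≤ kappaAlpha G b x y / (1 - b) := by
  have h1a : 0 < 1 - a := by linarith
  have h1b : 0 < 1 - b := by linarith
  have hd : (0 : ℝ) < G.dist x y := by exact_mod_cast hxy
  set t := (b - a) / (1 - a)
  have ht0 : 0 ≤ t := div_nonneg (by linarith) h1a.le
  have ht : 1 - t = (1 - b) / (1 - a) := by simp only [t]; field_simp; ring
  have ht1 : t < 1 := by linarith [div_pos h1b h1a]
  have hW : Wass G (mMeas G b x) (mMeas G b y)
      ≤ t * G.dist x y + (1 - t) * Wass G (mMeas G a x) (mMeas G a y) := by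
    rw [mMeas_eq_mix G (hab.trans_lt hb) b x, mMeas_eq_mix G (hab.trans_lt hb) b y]
    exact Wass_mix_dirac_le ht0 ht1 (mMeas_le_one G ha (by linarith) x)
      (exists_isCoupling_mMeas G ha (by linarith) hx hy) x y
  rw [ht] at hW
  unfold kappaAlpha
  rw [div_le_div_iff₀ h1a h1b, ← sub_nonneg]
  have hexp : (1 - Wass G (mMeas G b x) (mMeas G b y) / G.dist x y) * (1 - a)
      - (1 - Wass G (mMeas G a x) (mMeas G a y) / G.dist x y) * (1 - b)
      = (1 - a) / G.dist x y * (t * G.dist x y - Wass G (mMeas G b x) (mMeas G b y)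
        + (1 - b) / (1 - a) * Wass G (mMeas G a x) (mMeas G a y)) := by
    simp only [t]
    field_simp
    ring
  rw [hexp]
  exact mul_nonneg (by positivity) (by linarith)

lemma kappaAlpha_div_le_two (hconn : G.Connected) {x y : V} (hxy : G.Adj x y) {a : ℝ}
    (ha0 : 0 ≤ a) (ha1 : a < 1) :
    kappaAlpha G a x y / (1 - a) ≤ 2 := by
  have hx : 0 < G.degree x := G.degree_pos_iff_exists_adj x |>.mpr ⟨y, hxy⟩
  have hy : 0 < G.degree y := G.degree_pos_iff_exists_adj y |>.mpr ⟨x, hxy.symm⟩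
  have hlip : ∀ u v, (G.dist u y : ℝ) - G.dist v y ≤ G.dist u v := fun u v => by
    rw [sub_le_iff_le_add]
    exact_mod_cast hconn.dist_triangle
  have hW := sub_le_Wass_of_lipschitz (exists_isCoupling_mMeas G ha0 ha1.le hx hy) hlip
  have hNy : ∑ z ∈ G.neighborFinset y, (G.dist z y : ℝ) = G.degree y := by
    rw [sum_congr rfl fun z hz => by
      rw [SimpleGraph.dist_eq_one_iff_adj.mpr ((G.mem_neighborFinset y z).mp hz).symm]]
    simp
  have hNx : 0 ≤ (1 - a) / G.degree x * ∑ z ∈ G.neighborFinset x, (G.dist z y : ℝ) :=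
    mul_nonneg (div_nonneg (by linarith) (Nat.cast_nonneg _))
      (sum_nonneg fun _ _ => Nat.cast_nonneg _)
  rw [sum_mMeas_mul, sum_mMeas_mul, hNy, div_mul_cancel₀ _ (by positivity),
    SimpleGraph.dist_eq_one_iff_adj.mpr hxy, SimpleGraph.dist_self] at hW
  unfold kappaAlpha
  rw [SimpleGraph.dist_eq_one_iff_adj.mpr hxy, div_le_iff₀ (by linarith)]
  push_cast at hW ⊢
  linarith

lemma kappaAlpha_div_le_kappa (hconn : G.Connected) {x y : V} (hxy : G.Adj x y) {α : ℝ}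
    (hα0 : 0 ≤ α) (hα1 : α < 1) :
    kappaAlpha G α x y / (1 - α) ≤ kappa G x y := by
  have hx : 0 < G.degree x := G.degree_pos_iff_exists_adj x |>.mpr ⟨y, hxy⟩
  have hy : 0 < G.degree y := G.degree_pos_iff_exists_adj y |>.mpr ⟨x, hxy.symm⟩
  have hd : 0 < G.dist x y := by simp [SimpleGraph.dist_eq_one_iff_adj.mpr hxy]
  -- `max · 0` keeps the parameter in `[0, 1)`, where `mMeas` is a probability measure
  set g : ℝ → ℝ := fun a => kappaAlpha G (max a 0) x y / (1 - max a 0)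
  have hmono : MonotoneOn g (Set.Iio 1) := fun a _ b hb hab =>
    kappaAlpha_div_le_div hx hy hd (le_max_right a 0) (max_le_max_right 0 hab)
      (max_lt hb one_pos)
  have hbdd : BddAbove (g '' Set.Iio 1) := ⟨2, by
    rintro _ ⟨a, ha, rfl⟩
    exact kappaAlpha_div_le_two hconn hxy (le_max_right _ _) (max_lt ha one_pos)⟩
  have hlim : kappa G x y = sSup (g '' Set.Iio 1) := by
    refine ((hmono.tendsto_nhdsLT hbdd).congr' ?_).limUnder_eq
    filter_upwards [Ioo_mem_nhdsLT zero_lt_one] with a ha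
    simp [g, max_eq_left ha.1.le]
  rw [hlim]
  refine le_csSup_of_le hbdd ⟨α, hα1, rfl⟩ ?_
  simp [g, max_eq_left hα0]

end Curvature

lemma SimpleGraph.dist_le_two_of_adj {V : Type*} {G : SimpleGraph V} {u v w : V}
    (huv : G.Adj u v) (hvw : G.Adj v w) : G.dist u w ≤ 2 :=
  G.dist_le (.cons huv (.cons hvw .nil))

section Matching

variable {V : Type*} [Fintype V] [DecidableEq V] {G : SimpleGraph V} [DecidableRel G.Adj]

lemma degree_eq_of_neighborFinset_eq {x y : V} {S T : Finset V}
    (hN : G.neighborFinset x = insert y (S ∪ T)) (hy : y ∉ S ∪ T) (hST : Disjoint S T) :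
    (G.degree x : ℝ) = 1 + #S + #T := by
  rw [← G.card_neighborFinset_eq_degree, hN, card_insert_of_notMem hy,
    card_union_of_disjoint hST]
  push_cast
  ring

lemma div_degree_mul_eq_of_neighborFinset_eq {x y : V} {S T : Finset V}
    (hN : G.neighborFinset x = insert y (S ∪ T)) (hy : y ∉ S ∪ T) (hST : Disjoint S T) (c : ℝ) :
    c / G.degree x * (1 + #S + #T) = c := by
  have hd := degree_eq_of_neighborFinset_eq hN hy hST
  rw [← hd, div_mul_cancel₀ _ (by rw [hd]; positivity)]

lemma mMeas_eq_of_neighborFinset_eq {x y : V} {S T : Finset V}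
    (hN : G.neighborFinset x = insert y (S ∪ T)) (hy : y ∉ S ∪ T) (hST : Disjoint S T) (α : ℝ) :
    mMeas G α x =
      fun z => α * ind {x} z + (1 - α) / G.degree x * (ind {y} z + ind S z + ind T z) := by
  simp only [mMeas_eq_ind, hN, ind_insert_union hy hST]

def transferPlan (τ σ : V) (Sτ Tτ Sσ Tσ : Finset V) (φ : V → V) (α p q : ℝ) : V → V → ℝ :=
  rectPlan q {τ} {τ} + rectPlan p {σ} {σ} + rectPlan (2 * α - 1 + #Tτ * min p q) {τ} {σ}
    + rectPlan p Sτ {σ} + rectPlan q {τ} Sσ + matchPlan (min p q) Tτ φ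
    + rectPlan (p - min p q) Tτ {σ} + rectPlan (q - min p q) {τ} Tσ

lemma isCoupling_transferPlan {τ σ : V} {Sτ Tτ Sσ Tσ : Finset V} {φ : V → V}
    (hNτ : G.neighborFinset τ = insert σ (Sτ ∪ Tτ))
    (hNσ : G.neighborFinset σ = insert τ (Sσ ∪ Tσ)) (hσnot : σ ∉ Sτ ∪ Tτ) (hτnot : τ ∉ Sσ ∪ Tσ)
    (hdisjτ : Disjoint Sτ Tτ) (hdisjσ : Disjoint Sσ Tσ) (hφ : Set.BijOn φ ↑Tτ ↑Tσ)
    {α p q : ℝ} (hα0 : 1 / 2 ≤ α) (hα1 : α ≤ 1) (hp : p = (1 - α) / G.degree τ)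
    (hq : q = (1 - α) / G.degree σ) :
    IsCoupling (transferPlan τ σ Sτ Tτ Sσ Tσ φ α p q) (mMeas G α τ) (mMeas G α σ) := by
  have hTσ : Tτ.image φ = Tσ := coe_injective (by rw [coe_image]; exact hφ.image_eq)
  have hpd : p * (1 + #Sτ + #Tτ) = 1 - α :=
    hp ▸ div_degree_mul_eq_of_neighborFinset_eq hNτ hσnot hdisjτ _
  have hqd : q * (1 + #Sσ + #Tτ) = 1 - α := by
    rw [hq, hφ.finsetCard_eq]
    exact div_degree_mul_eq_of_neighborFinset_eq hNσ hτnot hdisjσ _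
  have hp0 : 0 ≤ p := hp ▸ div_nonneg (by linarith) (Nat.cast_nonneg _)
  have hq0 : 0 ≤ q := hq ▸ div_nonneg (by linarith) (Nat.cast_nonneg _)
  have hc0 : 0 ≤ min p q := le_min hp0 hq0
  refine .of_nonneg (fun x y => ?_) (fun x => ?_) (fun y => ?_)
    (mMeas_le_one G (by linarith) hα1 τ)
  · have := min_le_left p q
    have := min_le_right p q
    have := mul_nonneg (Nat.cast_nonneg (α := ℝ) #Tτ) hc0
    simp only [transferPlan, Pi.add_apply]
    repeat' apply add_nonneg
    all_goals first
      | exact matchPlan_nonneg hc0 _ _ _ _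
      | exact rectPlan_nonneg (by linarith) _ _ _ _
  · simp only [transferPlan, Pi.add_apply, sum_add_distrib, sum_rectPlan_right,
      sum_matchPlan_right, mMeas_eq_of_neighborFinset_eq hNτ hσnot hdisjτ, ← hp, card_singleton,
      ← hφ.finsetCard_eq]
    linear_combination ind {τ} x * hqd
  · simp only [transferPlan, Pi.add_apply, sum_add_distrib, sum_rectPlan_left,
      sum_matchPlan_left _ hφ.injOn, hTσ, mMeas_eq_of_neighborFinset_eq hNσ hτnot hdisjσ, ← hq,
      card_singleton]
    linear_combination ind {σ} y * hpd

lemma transportCost_transferPlan_le {τ σ : V} (hadj : G.Adj τ σ) {Sτ Tτ Sσ Tσ : Finset V}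
    {φ : V → V} (hNτ : G.neighborFinset τ = insert σ (Sτ ∪ Tτ))
    (hNσ : G.neighborFinset σ = insert τ (Sσ ∪ Tσ)) (hφadj : ∀ t ∈ Tτ, G.Adj t (φ t))
    {α p q : ℝ} (hα0 : 1 / 2 ≤ α) (hp0 : 0 ≤ p) (hq0 : 0 ≤ q) :
    transportCost G (transferPlan τ σ Sτ Tτ Sσ Tσ φ α p q)
      ≤ 0 * (q * #{τ} * #{τ}) + 0 * (p * #{σ} * #{σ})
        + 1 * ((2 * α - 1 + #Tτ * min p q) * #{τ} * #{σ}) + 2 * (p * #Sτ * #{σ})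
        + 2 * (q * #{τ} * #Sσ) + 1 * (min p q * #Tτ) + 2 * ((p - min p q) * #Tτ * #{σ})
        + 2 * ((q - min p q) * #{τ} * #Tσ) := by
  have hc0 : 0 ≤ min p q := le_min hp0 hq0
  have hτN : ∀ z ∈ Sτ ∪ Tτ, G.Adj τ z := fun z hz =>
    (G.mem_neighborFinset τ z).mp (hNτ ▸ mem_insert_of_mem hz)
  have hσN : ∀ z ∈ Sσ ∪ Tσ, G.Adj σ z := fun z hz =>
    (G.mem_neighborFinset σ z).mp (hNσ ▸ mem_insert_of_mem hz)
  have hdist_σ : ∀ x ∈ Sτ ∪ Tτ, ∀ y ∈ ({σ} : Finset V), (G.dist x y : ℝ) ≤ 2 := by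
    intro x hx y hy
    rw [mem_singleton.mp hy]
    exact_mod_cast G.dist_le_two_of_adj (hτN x hx).symm hadj
  have hdist_τ : ∀ x ∈ ({τ} : Finset V), ∀ y ∈ Sσ ∪ Tσ, (G.dist x y : ℝ) ≤ 2 := by
    intro x hx y hy
    rw [mem_singleton.mp hx]
    exact_mod_cast G.dist_le_two_of_adj hadj (hσN y hy)
  simp only [transferPlan, transportCost_add]
  gcongr
  · exact transportCost_rectPlan_le G (M := 0) hq0 (by simp)
  · exact transportCost_rectPlan_le G (M := 0) hp0 (by simp)
  · exact transportCost_rectPlan_le G (M := 1)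
      (add_nonneg (by linarith) (mul_nonneg (Nat.cast_nonneg _) hc0))
      (by simp [SimpleGraph.dist_eq_one_iff_adj.mpr hadj])
  · exact transportCost_rectPlan_le G hp0 fun x hx => hdist_σ x (mem_union_left _ hx)
  · exact transportCost_rectPlan_le G hq0 fun x hx y hy => hdist_τ x hx y (mem_union_left _ hy)
  · exact transportCost_matchPlan_le G hc0 fun x hx => by
      simp [SimpleGraph.dist_eq_one_iff_adj.mpr (hφadj x hx)]
  · exact transportCost_rectPlan_le G (sub_nonneg.mpr (min_le_left p q)) fun x hx =>
      hdist_σ x (mem_union_right _ hx)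
  · exact transportCost_rectPlan_le G (sub_nonneg.mpr (min_le_right p q)) fun x hx y hy =>
      hdist_τ x hx y (mem_union_right _ hy)

theorem Wass_mMeas_le_of_matching {τ σ : V} (hadj : G.Adj τ σ) {Sτ Tτ Sσ Tσ : Finset V}
    {φ : V → V} (hNτ : G.neighborFinset τ = insert σ (Sτ ∪ Tτ))
    (hNσ : G.neighborFinset σ = insert τ (Sσ ∪ Tσ)) (hσnot : σ ∉ Sτ ∪ Tτ) (hτnot : τ ∉ Sσ ∪ Tσ)
    (hdisjτ : Disjoint Sτ Tτ) (hdisjσ : Disjoint Sσ Tσ) (hφ : Set.BijOn φ ↑Tτ ↑Tσ)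
    (hφadj : ∀ t ∈ Tτ, G.Adj t (φ t)) {α : ℝ} (hα0 : 1 / 2 ≤ α) (hα1 : α ≤ 1) :
    Wass G (mMeas G α τ) (mMeas G α σ) ≤ 3 - 2 * α - 2 * ((1 - α) / G.degree τ)
      - 2 * ((1 - α) / G.degree σ)
      - 2 * #Tτ * min ((1 - α) / G.degree τ) ((1 - α) / G.degree σ) := by
  set p := (1 - α) / G.degree τ
  set q := (1 - α) / G.degree σ
  have hpd : p * (1 + #Sτ + #Tτ) = 1 - α :=
    div_degree_mul_eq_of_neighborFinset_eq hNτ hσnot hdisjτ _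
  have hqd : q * (1 + #Sσ + #Tσ) = 1 - α :=
    div_degree_mul_eq_of_neighborFinset_eq hNσ hτnot hdisjσ _
  calc Wass G (mMeas G α τ) (mMeas G α σ)
      ≤ transportCost G (transferPlan τ σ Sτ Tτ Sσ Tσ φ α p q) := Wass_le_transportCost
        (isCoupling_transferPlan hNτ hNσ hσnot hτnot hdisjτ hdisjσ hφ hα0 hα1 rfl rfl)
    _ ≤ _ := transportCost_transferPlan_le hadj hNτ hNσ hφadj hα0
        (div_nonneg (by linarith) (Nat.cast_nonneg _))
        (div_nonneg (by linarith) (Nat.cast_nonneg _))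
    _ = _ := by
      simp only [card_singleton, Nat.cast_one, ← hφ.finsetCard_eq] at hqd ⊢
      linear_combination 2 * hpd + 2 * hqd

theorem le_kappaAlpha_div_of_matching {τ σ : V} (hadj : G.Adj τ σ) {Sτ Tτ Sσ Tσ : Finset V}
    {φ : V → V} (hNτ : G.neighborFinset τ = insert σ (Sτ ∪ Tτ))
    (hNσ : G.neighborFinset σ = insert τ (Sσ ∪ Tσ)) (hσnot : σ ∉ Sτ ∪ Tτ) (hτnot : τ ∉ Sσ ∪ Tσ)
    (hdisjτ : Disjoint Sτ Tτ) (hdisjσ : Disjoint Sσ Tσ) (hφ : Set.BijOn φ ↑Tτ ↑Tσ)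
    (hφadj : ∀ t ∈ Tτ, G.Adj t (φ t)) {α : ℝ} (hα0 : 1 / 2 ≤ α) (hα1 : α < 1) :
    2 / G.degree τ + 2 / G.degree σ + 2 * #Tτ * min (1 / G.degree τ : ℝ) (1 / G.degree σ) - 2
      ≤ kappaAlpha G α τ σ / (1 - α) := by
  have hW := Wass_mMeas_le_of_matching hadj hNτ hNσ hσnot hτnot hdisjτ hdisjσ hφ hφadj hα0
    hα1.le
  have hmin : min ((1 - α) / G.degree τ) ((1 - α) / G.degree σ)
      = (1 - α) * min (1 / G.degree τ : ℝ) (1 / G.degree σ) := by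
    rw [mul_min_of_nonneg _ _ (by linarith), mul_one_div, mul_one_div]
  unfold kappaAlpha
  rw [SimpleGraph.dist_eq_one_iff_adj.mpr hadj, Nat.cast_one, div_one, le_div_iff₀ (by linarith)]
  rw [hmin] at hW
  linear_combination hW

end Matching

lemma ricci_bound_eq {a b s s' m : ℝ} (ha : a = 1 + s + m) (hb : b = 1 + s' + m) (hs : 0 ≤ s)
    (hs' : 0 ≤ s') (hm : 0 ≤ m) :
    (2 - s - s') / max a b + 2 * (1 / min a b - 1 / max a b) + min a b / max a b - 1
      = 2 / a + 2 / b + 2 * m * min (1 / a) (1 / b) - 2 := by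
  have ha0 : 0 < a := by linarith
  have hb0 : 0 < b := by linarith
  rcases le_total a b with h | h
  · rw [min_eq_left h, max_eq_right h, min_eq_right (one_div_le_one_div_of_le ha0 h)]
    subst ha hb
    field_simp
    ring
  · rw [min_eq_right h, max_eq_left h, min_eq_left (one_div_le_one_div_of_le hb0 h)]
    subst ha hb
    field_simp
    ring

theorem stmt0_general
    {V : Type*} [Fintype V] [DecidableEq V]
    (G : SimpleGraph V) [DecidableRel G.Adj]
    (hconn : G.Connected)
    (τ σ : V) (hadj : G.Adj τ σ)
    (Sτ Tτ Sσ Tσ : Finset V) (φ : V → V)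
    (hNτ : G.neighborFinset τ = insert σ (Sτ ∪ Tτ))
    (hNσ : G.neighborFinset σ = insert τ (Sσ ∪ Tσ))
    (hσnot : σ ∉ Sτ ∪ Tτ) (hτnot : τ ∉ Sσ ∪ Tσ)
    (hdisjτ : Disjoint Sτ Tτ) (hdisjσ : Disjoint Sσ Tσ)
    (hφ : Set.BijOn φ ↑Tτ ↑Tσ)
    (hφadj : ∀ t ∈ Tτ, G.Adj t (φ t)) :
    (((2 : ℝ) - (Sτ.card : ℝ) - (Sσ.card : ℝ)) / max (G.degree τ : ℝ) (G.degree σ : ℝ)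
      + 2 * (1 / min (G.degree τ : ℝ) (G.degree σ : ℝ)
              - 1 / max (G.degree τ : ℝ) (G.degree σ : ℝ))
      + min (G.degree τ : ℝ) (G.degree σ : ℝ) / max (G.degree τ : ℝ) (G.degree σ : ℝ) - 1) ≤ kappa G τ σ := by
  have hdτ := degree_eq_of_neighborFinset_eq hNτ hσnot hdisjτ
  have hdσ := degree_eq_of_neighborFinset_eq hNσ hτnot hdisjσ
  rw [← hφ.finsetCard_eq] at hdσ
  rw [ricci_bound_eq hdτ hdσ (Nat.cast_nonneg _) (Nat.cast_nonneg _) (Nat.cast_nonneg _)]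
  calc _ ≤ kappaAlpha G (1 / 2) τ σ / (1 - 1 / 2) :=
        le_kappaAlpha_div_of_matching hadj hNτ hNσ hσnot hτnot hdisjτ hdisjσ hφ hφadj le_rfl
          (by norm_num)
    _ ≤ kappa G τ σ := kappaAlpha_div_le_kappa hconn hadj (by norm_num) (by norm_num)

theorem stmt0
    {V : Type*} [Fintype V] [DecidableEq V]
    (G : SimpleGraph V) [DecidableRel G.Adj]
    (hconn : G.Connected) (hcard : 1 < Fintype.card V)
    (τ σ : V) (hadj : G.Adj τ σ)
    (Sτ Tτ Sσ Tσ : Finset V) (φ : V → V)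
    (hNτ : G.neighborFinset τ = insert σ (Sτ ∪ Tτ))
    (hNσ : G.neighborFinset σ = insert τ (Sσ ∪ Tσ))
    (hσnot : σ ∉ Sτ ∪ Tτ) (hτnot : τ ∉ Sσ ∪ Tσ)
    (hdisjτ : Disjoint Sτ Tτ) (hdisjσ : Disjoint Sσ Tσ)
    (hφ : Set.BijOn φ ↑Tτ ↑Tσ)
    (hφadj : ∀ t ∈ Tτ, G.Adj t (φ t)) :
    (((2 : ℝ) - (Sτ.card : ℝ) - (Sσ.card : ℝ)) / max (G.degree τ : ℝ) (G.degree σ : ℝ)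
      + 2 * (1 / min (G.degree τ : ℝ) (G.degree σ : ℝ)
              - 1 / max (G.degree τ : ℝ) (G.degree σ : ℝ))
      + min (G.degree τ : ℝ) (G.degree σ : ℝ) / max (G.degree τ : ℝ) (G.degree σ : ℝ) - 1) ≤ kappa G τ σ :=
  stmt0_general G hconn τ σ hadj Sτ Tτ Sσ Tσ φ hNτ hNσ hσnot hτnot hdisjτ hdisjσ hφ hφadj
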